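/- Let {T_v} be a collection of topes, one for each lattice point v of nΔ^{d−1}, with RD(T_v) = v for each v. Suppose that for every lattice point w of (n+1)Δ^{d−1}, the union ⋃_{j̄ : w_j̄ ≥ 1} T_{w−e_j̄} is a tree on the vertex set [n] ⊔ {j̄ : w_j̄ ≥ 1} in which every vertex of [n] has degree 1 or 2. Then the combinatorial sector axiom holds: whenever v − e_j̄ = v' − e_j̄' for lattice points v, v' of nΔ^{d−1} and j̄, j̄' ∈ [d̄], one has T_{v'}^{-1}(j̄) ⊆ T_v^{-1}(j̄). -/

import Mathlib

open Finset

/-- A bipartite graph between `α` and `β`, identified with its edge set. -/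
abbrev BGraph (α β : Type*) := Finset (α × β)

section BipartiteDefs

variable {α β : Type*} [DecidableEq α] [DecidableEq β]

/-- Left degree vector. -/
def LD (G : BGraph α β) (a : α) : ℕ := (G.filter fun e => e.1 = a).card

/-- Right degree vector. -/
def RD (G : BGraph α β) (b : β) : ℕ := (G.filter fun e => e.2 = b).card

/-- The simple graph on `α ⊕ β` associated to a bipartite edge set. -/
def toGraph (G : BGraph α β) : SimpleGraph (α ⊕ β) :=
  SimpleGraph.fromRel fun x y => ∃ a b, x = Sum.inl a ∧ y = Sum.inr b ∧ (a, b) ∈ G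

/-- Acyclicity of a bipartite edge set. -/
def Acyclic (G : BGraph α β) : Prop := (toGraph G).IsAcyclic

/-- `U` is a tree on the vertex set `I ⊔ J`. -/
def IsTreeOn (U : BGraph α β) (I : Finset α) (J : Finset β) : Prop :=
  (∀ e ∈ U, e.1 ∈ I ∧ e.2 ∈ J) ∧ Acyclic U ∧
    ∀ x y : α ⊕ β, Sum.elim (· ∈ I) (· ∈ J) x → Sum.elim (· ∈ I) (· ∈ J) y →
      (toGraph U).Reachable x y

/-- `M` is a perfect matching between `I` and `J`. -/
def IsMatching (M : BGraph α β) (I : Finset α) (J : Finset β) : Prop :=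
  (∀ e ∈ M, e.1 ∈ I ∧ e.2 ∈ J) ∧ (∀ a ∈ I, ∃! b : β, (a, b) ∈ M) ∧
    ∀ b ∈ J, ∃! a : α, (a, b) ∈ M

/-- Compatibility of two bipartite graphs. -/
def Compatible (G G' : BGraph α β) : Prop :=
  ∀ (I : Finset α) (J : Finset β) (M M' : BGraph α β),
    M ⊆ G → M' ⊆ G' → IsMatching M I J → IsMatching M' I J → M = M'

end BipartiteDefs

section TopeDefs

variable {n d : ℕ}

/-- The graph of a tope `T : [n] → [d]`. -/
def topeGraph (T : Fin n → Fin d) : BGraph (Fin n) (Fin d) :=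
  Finset.univ.image fun i => (i, T i)

/-- The position (right degree vector) of a tope. -/
def topePos (T : Fin n → Fin d) : Fin d → ℕ :=
  fun j => (Finset.univ.filter fun i => T i = j).card

/-- Standard unit vector `e_j`. -/
def unitVec (j : Fin d) : Fin d → ℕ := fun k => if k = j then 1 else 0

end TopeDefs

/-- Support of a vector. -/
def suppF {d : ℕ} (w : Fin d → ℕ) : Finset (Fin d) :=
  Finset.univ.filter fun j => 1 ≤ w j

/-- The union of the topes at the vertices of the upside-down simplex `w + ∇^{d-1}`. -/
def nablaUnion {n d : ℕ} (T : (Fin d → ℕ) → Fin n → Fin d) (w : Fin d → ℕ) :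
    BGraph (Fin n) (Fin d) :=
  (suppF w).biUnion fun j => topeGraph (T (w - unitVec j))

/-! Put `A := T (u + e_j)` and `B := T (u + e_j')`. Both graphs lie in the tree `nablaUnion T w`
for `w = u + e_j + e_j'`, so their union is a forest. On the set `D` of left vertices where `A`
and `B` differ, the edges of `A` and `B` form a forest with `2 |D|` edges on the vertex set
`D ⊔ (A(D) ∪ B(D))`, hence `|A(D) ∪ B(D)| > |D|`.

Now let `B i = j` and suppose `A i ≠ j`, so `i ∈ D`. Every value `l ≠ j` that `A` takes on `D`
is also taken by `B` on `D`: otherwise the `B`-fibre of `l` would be a proper subset of the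
`A`-fibre, whereas `RD(A) + e_j' = RD(B) + e_j` makes it at least as large. The value `j` is
`B i`. So `A(D) ∪ B(D) = B(D)` has at most `|D|` elements, a contradiction. -/

theorem SimpleGraph.IsAcyclic.card_edgeSet_add_one_le {V : Type*} [Finite V] [Nonempty V]
    {G : SimpleGraph V} (h : G.IsAcyclic) : Nat.card G.edgeSet + 1 ≤ Nat.card V := by
  obtain ⟨F, hGF, -, hF⟩ := connected_top.exists_isTree_le_of_le_of_isAcyclic le_top h
  rw [← (isTree_iff_connected_and_card.1 hF).2]
  gcongr
  exact Nat.card_mono (Set.toFinite _) (edgeSet_mono hGF)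

section Bipartite

variable {α β : Type*}

lemma toGraph_adj_inl_inr {G : BGraph α β} {a : α} {b : β} :
    (toGraph G).Adj (.inl a) (.inr b) ↔ (a, b) ∈ G := by
  simp [toGraph]

lemma toGraph_mono {G G' : BGraph α β} (h : G ⊆ G') : toGraph G ≤ toGraph G' := by
  rintro x y ⟨hne, ⟨a, b, rfl, rfl, hab⟩ | ⟨a, b, rfl, rfl, hab⟩⟩
  · exact ⟨hne, .inl ⟨a, b, rfl, rfl, h hab⟩⟩
  · exact ⟨hne, .inr ⟨a, b, rfl, rfl, h hab⟩⟩

lemma Acyclic.anti {G G' : BGraph α β} (h : G ⊆ G') (hac : Acyclic G') : Acyclic G :=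
  SimpleGraph.IsAcyclic.anti (toGraph_mono h) hac

variable [DecidableEq α] [DecidableEq β]

lemma Acyclic.card_add_one_le {G : BGraph α β} (hG : G.Nonempty) (hac : Acyclic G) :
    #G + 1 ≤ #(G.image Prod.fst) + #(G.image Prod.snd) := by
  set S : Set (α ⊕ β) := ↑((G.image Prod.fst).disjSum (G.image Prod.snd))
  obtain ⟨e, he⟩ := hG
  have : Nonempty S := ⟨⟨.inl e.1, inl_mem_disjSum.2 (mem_image_of_mem _ he)⟩⟩
  let edge : G → (toGraph G |>.induce S).edgeSet := fun e =>
    ⟨s(⟨.inl e.1.1, inl_mem_disjSum.2 (mem_image_of_mem _ e.2)⟩,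
      ⟨.inr e.1.2, inr_mem_disjSum.2 (mem_image_of_mem _ e.2)⟩),
      (SimpleGraph.mem_edgeSet _).2 (toGraph_adj_inl_inr.2 e.2)⟩
  have hedge : Function.Injective edge := by
    rintro ⟨⟨a, b⟩, _⟩ ⟨⟨a', b'⟩, _⟩ h
    simp only [edge, Subtype.mk.injEq, Sym2.eq, Sym2.rel_iff', Prod.mk.injEq, Sum.inl.injEq,
      Sum.inr.injEq, Prod.swap_prod_mk, reduceCtorEq, and_self, or_false] at h
    obtain ⟨rfl, rfl⟩ := h
    rfl
  calc #G + 1 = Nat.card G + 1 := by rw [Nat.card_eq_finsetCard]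
    _ ≤ Nat.card (toGraph G |>.induce S).edgeSet + 1 := by
      gcongr
      exact Nat.card_le_card_of_injective edge hedge
    _ ≤ Nat.card S := (hac.induce S).card_edgeSet_add_one_le
    _ = _ := by rw [Nat.card_coe_set_eq, Set.ncard_coe_finset, card_disjSum]

lemma card_lt_card_image_union_of_acyclic {A B : α → β} {D : Finset α} (hD : D.Nonempty)
    (hne : ∀ i ∈ D, A i ≠ B i)
    (hac : Acyclic (D.image (fun i => (i, A i)) ∪ D.image (fun i => (i, B i)))) :
    #D < #(D.image A ∪ D.image B) := by
  have hinj : ∀ F : α → β, Set.InjOn (fun i => (i, F i)) D :=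
    fun F _ _ _ _ h => congrArg Prod.fst h
  have hdisj : Disjoint (D.image (fun i => (i, A i))) (D.image (fun i => (i, B i))) := by
    simp only [disjoint_left, mem_image, not_exists, not_and]
    rintro _ ⟨i, hi, rfl⟩ i' - h
    simp only [Prod.mk.injEq] at h
    exact hne i hi (h.1 ▸ h.2).symm
  set G := D.image (fun i => (i, A i)) ∪ D.image (fun i => (i, B i))
  have hcard : #G = #D + #D := by
    rw [card_union_of_disjoint hdisj, card_image_of_injOn (hinj A),
      card_image_of_injOn (hinj B)]
  have hfst : G.image Prod.fst = D := by simp [G, image_union, image_image, Function.comp_def]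
  have hsnd : G.image Prod.snd = D.image A ∪ D.image B := by
    simp [G, image_union, image_image, Function.comp_def]
  have := hac.card_add_one_le (hD.image _ |>.mono subset_union_left)
  rw [hcard, hfst, hsnd] at this
  omega

end Bipartite

section Topes

variable {n d : ℕ}

lemma unitVec_eq_single (j : Fin d) : unitVec j = Pi.single j 1 := by
  ext k
  simp [unitVec, Pi.single_apply]

lemma sum_add_unitVec (u : Fin d → ℕ) (j : Fin d) :
    ∑ k, (u + unitVec j) k = ∑ k, u k + 1 := by
  simp [unitVec_eq_single, sum_add_distrib]

lemma one_le_add_unitVec_apply (u : Fin d → ℕ) (j : Fin d) : 1 ≤ (u + unitVec j) j := by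
  simp [unitVec]

lemma topePos_lt_of_fiber_ssubset {A B : Fin n → Fin d} {l : Fin d}
    (hsub : ∀ i, B i = l → A i = l) (i₀ : Fin n) (hA : A i₀ = l) (hB : B i₀ ≠ l) :
    topePos B l < topePos A l :=
  card_lt_card ⟨fun i hi => by simp_all, fun h => hB (by simpa using h (by simpa using hA))⟩

theorem apply_eq_of_topePos_of_acyclic {A B : Fin n → Fin d} {j j' : Fin d}
    (hpos : topePos A + unitVec j' = topePos B + unitVec j)
    (hac : Acyclic (topeGraph A ∪ topeGraph B)) {i : Fin n} (h : B i = j) : A i = j := by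
  by_contra hA
  set D := univ.filter fun k => A k ≠ B k
  have hiD : i ∈ D := by simp [D, h, hA]
  have hsub : D.image A ⊆ D.image B := by
    simp only [subset_iff, mem_image]
    rintro _ ⟨k, hk, rfl⟩
    by_cases hkj : A k = j
    · exact ⟨i, hiD, h.trans hkj.symm⟩
    by_contra! hnot
    have hfiber : ∀ i, B i = A k → A i = A k := fun i hi => by
      by_contra hne
      exact hnot i (by simp [D, hi, hne]) hi
    have hlt := topePos_lt_of_fiber_ssubset hfiber k rfl (mem_filter.1 hk).2.symm
    have heq := congrFun hpos (A k)
    have hunit : unitVec j (A k) = 0 := if_neg hkj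
    simp only [Pi.add_apply, hunit] at heq
    omega
  have hlt := card_lt_card_image_union_of_acyclic ⟨i, hiD⟩ (fun k hk => (mem_filter.1 hk).2)
    (hac.anti (union_subset_union (image_subset_image (subset_univ D))
      (image_subset_image (subset_univ D))))
  rw [union_eq_right.2 hsub] at hlt
  exact hlt.not_ge card_image_le

lemma topeGraph_subset_nablaUnion (T : (Fin d → ℕ) → Fin n → Fin d) {w : Fin d → ℕ}
    {j : Fin d} (hj : 1 ≤ w j) : topeGraph (T (w - unitVec j)) ⊆ nablaUnion T w :=
  subset_biUnion_of_mem (fun j => topeGraph (T (w - unitVec j))) (by simpa [suppF] using hj)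

end Topes

theorem statement16 {n d : ℕ} (T : (Fin d → ℕ) → Fin n → Fin d)
    (hpos : ∀ v : Fin d → ℕ, (∑ j, v j) = n → topePos (T v) = v)
    (hnabla : ∀ w : Fin d → ℕ, (∑ j, w j) = n + 1 →
      IsTreeOn (nablaUnion T w) Finset.univ (suppF w) ∧
        ∀ i : Fin n, 1 ≤ LD (nablaUnion T w) i ∧ LD (nablaUnion T w) i ≤ 2)
    (u : Fin d → ℕ) (hu : (∑ k, u k) + 1 = n) (j j' : Fin d) (i : Fin n)
    (h : T (u + unitVec j') i = j) : T (u + unitVec j) i = j := by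
  set w := u + unitVec j + unitVec j'
  have hw : ∑ k, w k = n + 1 := by rw [sum_add_unitVec, sum_add_unitVec, hu]
  have hw' : w = u + unitVec j' + unitVec j := add_right_comm _ _ _
  have hac : Acyclic (topeGraph (T (u + unitVec j)) ∪ topeGraph (T (u + unitVec j'))) := by
    refine (hnabla w hw).1.2.1.anti (union_subset ?_ ?_)
    · simpa only [w, add_tsub_cancel_right] using
        topeGraph_subset_nablaUnion T (one_le_add_unitVec_apply (u + unitVec j) j')
    · simpa only [hw', add_tsub_cancel_right] using
        topeGraph_subset_nablaUnion T (one_le_add_unitVec_apply (u + unitVec j') j)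
  have hshift :
      topePos (T (u + unitVec j)) + unitVec j' = topePos (T (u + unitVec j')) + unitVec j := by
    rw [hpos _ (by rw [sum_add_unitVec, hu]), hpos _ (by rw [sum_add_unitVec, hu]),
      add_right_comm]
  exact apply_eq_of_topePos_of_acyclic hshift hac h
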